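/- Let N and M be von Neumann subalgebras of a von Neumann algebra L ⊆ B(H) with N ⊆_γ M for some γ > 0. If the inclusion N ⊆ L has the relative Dixmier property, then M' ∩ L ⊆_{2γ} N' ∩ L, i.e. for every x in the unit ball of M' ∩ L there exists y ∈ N' ∩ L with ‖x − y‖ ≤ 2γ. -/

import Mathlib

/-!
For a unitary `u ∈ N` pick `m ∈ M` with `‖u - m‖ ≤ γ`. If `x ∈ M'` has norm at most one, then
`‖u x u* - x‖ = ‖u x - x u‖ = ‖(u - m) x - x (u - m)‖ ≤ 2γ`, so the whole unitary orbit of `x`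
under `N`, hence its closed convex hull, lies in the closed ball of radius `2γ` about `x`.
The relative Dixmier property provides a point of `N' ∩ L` in that hull.
-/

set_option synthInstance.maxHeartbeats 400000
set_option maxHeartbeats 1000000

variable {H : Type*} [NormedAddCommGroup H] [InnerProductSpace ℂ H] [CompleteSpace H]

/-- `S ⊆_γ T`: every element of the closed unit ball of `S` is within distance `γ`
of some element of `T`. -/
def nearIncl (γ : ℝ) (S T : Set (H →L[ℂ] H)) : Prop :=
  ∀ x ∈ S, ‖x‖ ≤ 1 → ∃ y ∈ T, ‖x - y‖ ≤ γ

/-- The set `{u x u* : u a unitary of N}`. -/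
def unitaryConjOrbit (N : VonNeumannAlgebra H) (x : H →L[ℂ] H) : Set (H →L[ℂ] H) :=
  {y | ∃ u : H →L[ℂ] H, u ∈ N ∧ u ∈ unitary (H →L[ℂ] H) ∧ y = u * x * star u}

/-- The inclusion `N ⊆ L` has the relative Dixmier property if for every `x ∈ L` the
norm-closed convex hull of the unitary `N`-conjugates of `x` meets `N' ∩ L`. -/
def HasRelDixmier (N L : VonNeumannAlgebra H) : Prop :=
  ∀ x ∈ (L : Set (H →L[ℂ] H)),
    (closure (convexHull ℝ (unitaryConjOrbit N x)) ∩
      (N.commutant : Set (H →L[ℂ] H)) ∩ (L : Set (H →L[ℂ] H))).Nonempty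

section Commutator

variable {E : Type*}

theorem norm_mul_sub_mul_le_of_commute [NormedRing E] {x m : E} (hxm : Commute x m) (u : E) :
    ‖u * x - x * u‖ ≤ 2 * ‖u - m‖ * ‖x‖ := by
  have hsplit : u * x - x * u = (u - m) * x - x * (u - m) := by
    rw [sub_mul, mul_sub, hxm.eq]
    abel
  calc ‖u * x - x * u‖ = ‖(u - m) * x - x * (u - m)‖ := by rw [hsplit]
    _ ≤ ‖u - m‖ * ‖x‖ + ‖x‖ * ‖u - m‖ :=
        (norm_sub_le _ _).trans (add_le_add (norm_mul_le _ _) (norm_mul_le _ _))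
    _ = 2 * ‖u - m‖ * ‖x‖ := by ring

variable [NormedRing E] [StarRing E] [CStarRing E]

theorem norm_le_one_of_mem_unitary {u : E} (hu : u ∈ unitary E) : ‖u‖ ≤ 1 := by
  cases subsingleton_or_nontrivial E with
  | inl _ => simp [Subsingleton.elim u 0]
  | inr _ => exact (CStarRing.norm_of_mem_unitary hu).le

theorem norm_unitary_conj_sub_le_of_commute {u x m : E} (hu : u ∈ unitary E)
    (hxm : Commute x m) : ‖u * x * star u - x‖ ≤ 2 * ‖u - m‖ * ‖x‖ := by
  have hconj : u * x * star u - x = (u * x - x * u) * star u := by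
    rw [sub_mul, mul_assoc x, Unitary.mul_star_self_of_mem hu, mul_one]
  rw [hconj, CStarRing.norm_mul_mem_unitary _ (Unitary.star_mem hu)]
  exact norm_mul_sub_mul_le_of_commute hxm u

end Commutator

theorem unitaryConjOrbit_subset_closedBall {N M : VonNeumannAlgebra H} {γ : ℝ}
    (hNM : nearIncl γ (N : Set (H →L[ℂ] H)) (M : Set (H →L[ℂ] H)))
    {x : H →L[ℂ] H} (hxM : x ∈ M.commutant) (hx1 : ‖x‖ ≤ 1) :
    unitaryConjOrbit N x ⊆ Metric.closedBall x (2 * γ) := by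
  rintro _ ⟨u, huN, hu, rfl⟩
  obtain ⟨m, hmM, hum⟩ := hNM u huN (norm_le_one_of_mem_unitary hu)
  have hxm : Commute x m := (VonNeumannAlgebra.mem_commutant_iff.mp hxM m hmM).symm
  have hγ : 0 ≤ γ := (norm_nonneg _).trans hum
  rw [Metric.mem_closedBall, dist_eq_norm]
  calc ‖u * x * star u - x‖ ≤ 2 * ‖u - m‖ * ‖x‖ := norm_unitary_conj_sub_le_of_commute hu hxm
    _ ≤ 2 * γ * 1 := by gcongr
    _ = 2 * γ := mul_one _

theorem commutant_nearIncl_of_relDixmier_general (N M L : VonNeumannAlgebra H)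
    (γ : ℝ) (hNM : nearIncl γ (N : Set (H →L[ℂ] H)) (M : Set (H →L[ℂ] H)))
    (hDix : HasRelDixmier N L) :
    nearIncl (2 * γ) ((M.commutant : Set (H →L[ℂ] H)) ∩ (L : Set (H →L[ℂ] H)))
      ((N.commutant : Set (H →L[ℂ] H)) ∩ (L : Set (H →L[ℂ] H))) := by
  rintro x ⟨hxM, hxL⟩ hx1
  obtain ⟨y, ⟨hy, hyN⟩, hyL⟩ := hDix x hxL
  have hhull : closure (convexHull ℝ (unitaryConjOrbit N x)) ⊆ Metric.closedBall x (2 * γ) :=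
    closure_minimal
      (convexHull_min (unitaryConjOrbit_subset_closedBall hNM hxM hx1) (convex_closedBall _ _))
      Metric.isClosed_closedBall
  refine ⟨y, ⟨hyN, hyL⟩, ?_⟩
  simpa [dist_eq_norm, norm_sub_rev] using hhull hy

/-- If `N, M` are von Neumann subalgebras of `L` with `N ⊆_γ M`, and `N ⊆ L` has the relative
Dixmier property, then `M' ∩ L ⊆_{2γ} N' ∩ L`. -/
theorem commutant_nearIncl_of_relDixmier (N M L : VonNeumannAlgebra H)
    (hNL : (N : Set (H →L[ℂ] H)) ⊆ (L : Set (H →L[ℂ] H)))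
    (hML : (M : Set (H →L[ℂ] H)) ⊆ (L : Set (H →L[ℂ] H)))
    (γ : ℝ) (hγ : 0 < γ) (hNM : nearIncl γ (N : Set (H →L[ℂ] H)) (M : Set (H →L[ℂ] H)))
    (hDix : HasRelDixmier N L) :
    nearIncl (2 * γ) ((M.commutant : Set (H →L[ℂ] H)) ∩ (L : Set (H →L[ℂ] H)))
      ((N.commutant : Set (H →L[ℂ] H)) ∩ (L : Set (H →L[ℂ] H))) :=
  commutant_nearIncl_of_relDixmier_general N M L γ hNM hDix
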